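/- arXiv:math/0602465 — 2 statements merged into one kernel-verified Lean document; each statement's English description precedes it below -/
import Mathlib

section
/- Let x, y, z ∈ L³([0,1]) and define X_t = ∫₀ᵗ x_s ds, Y_t = ∫₀ᵗ y_s ds. With X_r^{(n)} = X_r − X_{n(r)} and n(s) = ⌊ns⌋/n, one has for every n ≥ 1 and t ∈ [0,1]: n² |∫₀ᵗ (∫_{n(s)}^{s} X_r^{(n)} y_r dr) z_s ds| ≤ ‖x‖₃ ‖y‖₃ ‖z‖₃. -/
open MeasureTheory Filter

/-- `nfl n s = ⌊n s⌋ / n`, the left endpoint of the partition interval containing `s`. -/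
noncomputable def nfl (n : ℕ) (s : ℝ) : ℝ := (⌊(n : ℝ) * s⌋ : ℝ) / n

/-!
Cut `[0,1]` into the cells `[k/n, (k+1)/n]`. For `s` in cell `k` the whole inner integral lives in
that cell, where `X r - X (nfl n r) = ∫_{k/n}^r x`; so it is bounded by `P_k Q_k`, the integrals
of `|x|` and `|y|` over the cell, and the outer integral by `∑ₖ P_k Q_k R_k`. Hölder on a cell of
length `1/n` gives `P_k ≤ n^{-2/3} ‖x‖_{L³(cell)}`, which produces the factor `n⁻²`, and the
discrete Hölder inequality with exponents `(3,3,3)` sums the cells up.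
-/

open Set

theorem integral_norm_le_measureReal_rpow_mul {α E : Type*} [MeasurableSpace α] {μ : Measure α}
    [IsFiniteMeasure μ] [NormedAddCommGroup E] {f : α → E} {p q : ℝ}
    (hpq : p.HolderConjugate q) (hf : MemLp f (ENNReal.ofReal p) μ) :
    ∫ a, ‖f a‖ ∂μ ≤ μ.real univ ^ (1 / q) * (∫ a, ‖f a‖ ^ p ∂μ) ^ (1 / p) := by
  have h := integral_mul_le_Lp_mul_Lq_of_nonneg hpq (ae_of_all _ fun a => norm_nonneg (f a))
    (ae_of_all _ fun _ => zero_le_one) hf.norm (memLp_const (1 : ℝ))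
  simp only [mul_one, Real.one_rpow, integral_const, smul_eq_mul] at h
  rwa [mul_comm]

theorem memLp_natCast_iff_integrable_abs_pow {α : Type*} [MeasurableSpace α] {μ : Measure α}
    {f : α → ℝ} {p : ℕ} (hp : p ≠ 0) (hf : AEStronglyMeasurable f μ) :
    MemLp f p μ ↔ Integrable (fun a => |f a| ^ p) μ := by
  rw [← integrable_norm_rpow_iff hf (by exact_mod_cast hp) (by simp)]
  simp [Real.norm_eq_abs]

theorem intervalIntegral_abs_le_of_memLp_three {f : ℝ → ℝ} {a b : ℝ} (hab : a ≤ b)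
    (hf : MemLp f 3 (volume.restrict (Ioc a b))) :
    ∫ s in a..b, |f s| ≤ (b - a) ^ (2 / 3 : ℝ) * (∫ s in a..b, |f s| ^ 3) ^ (1 / 3 : ℝ) := by
  have hpq : (3 : ℝ).HolderConjugate (3 / 2) := by
    rw [Real.holderConjugate_iff]; norm_num
  have h := integral_norm_le_measureReal_rpow_mul hpq (by simpa using hf)
  simp only [Real.norm_eq_abs, measureReal_restrict_apply_univ, Real.volume_real_Ioc_of_le hab]
    at h
  rw [intervalIntegral.integral_of_le hab, intervalIntegral.integral_of_le hab]
  convert h using 3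
  · norm_num
  · norm_cast

theorem sum_rpow_mul_rpow_mul_rpow_le {ι : Type*} (s : Finset ι) {A B C : ι → ℝ}
    (hA : ∀ i, 0 ≤ A i) (hB : ∀ i, 0 ≤ B i) (hC : ∀ i, 0 ≤ C i) :
    ∑ i ∈ s, A i ^ (1 / 3 : ℝ) * B i ^ (1 / 3 : ℝ) * C i ^ (1 / 3 : ℝ) ≤
      (∑ i ∈ s, A i) ^ (1 / 3 : ℝ) * (∑ i ∈ s, B i) ^ (1 / 3 : ℝ) *
        (∑ i ∈ s, C i) ^ (1 / 3 : ℝ) := by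
  have hpq : (3 / 2 : ℝ).HolderConjugate 3 := by
    rw [Real.holderConjugate_iff]; norm_num
  have hAB : ∀ i, (A i ^ (1 / 3 : ℝ) * B i ^ (1 / 3 : ℝ)) ^ (3 / 2 : ℝ) = √(A i) * √(B i) :=
    fun i => by
      rw [Real.mul_rpow (Real.rpow_nonneg (hA i) _) (Real.rpow_nonneg (hB i) _),
        ← Real.rpow_mul (hA i), ← Real.rpow_mul (hB i), Real.sqrt_eq_rpow, Real.sqrt_eq_rpow]
      norm_num
  have hC3 : ∀ i, (C i ^ (1 / 3 : ℝ)) ^ (3 : ℝ) = C i := fun i => by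
    rw [← Real.rpow_mul (hC i)]; norm_num
  -- Hölder with exponents `(3/2, 3)`, then Cauchy–Schwarz inside the first factor
  calc ∑ i ∈ s, A i ^ (1 / 3 : ℝ) * B i ^ (1 / 3 : ℝ) * C i ^ (1 / 3 : ℝ)
      ≤ (∑ i ∈ s, (A i ^ (1 / 3 : ℝ) * B i ^ (1 / 3 : ℝ)) ^ (3 / 2 : ℝ)) ^ (1 / (3 / 2) : ℝ) *
          (∑ i ∈ s, (C i ^ (1 / 3 : ℝ)) ^ (3 : ℝ)) ^ (1 / 3 : ℝ) :=
        Real.inner_le_Lp_mul_Lq_of_nonneg s hpq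
          (fun i _ => mul_nonneg (Real.rpow_nonneg (hA i) _) (Real.rpow_nonneg (hB i) _))
          (fun i _ => Real.rpow_nonneg (hC i) _)
    _ = (∑ i ∈ s, √(A i) * √(B i)) ^ (2 / 3 : ℝ) * (∑ i ∈ s, C i) ^ (1 / 3 : ℝ) := by
        simp only [hAB, hC3]; norm_num
    _ ≤ (√(∑ i ∈ s, A i) * √(∑ i ∈ s, B i)) ^ (2 / 3 : ℝ) * (∑ i ∈ s, C i) ^ (1 / 3 : ℝ) := by
        refine mul_le_mul_of_nonneg_right (Real.rpow_le_rpow ?_ (Real.sum_sqrt_mul_sqrt_le s hA hB)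
          (by norm_num)) (Real.rpow_nonneg (Finset.sum_nonneg fun i _ => hC i) _)
        exact Finset.sum_nonneg fun i _ => by positivity
    _ = _ := by
        rw [Real.mul_rpow (by positivity) (by positivity), Real.sqrt_eq_rpow, Real.sqrt_eq_rpow,
          ← Real.rpow_mul (Finset.sum_nonneg fun i _ => hA i),
          ← Real.rpow_mul (Finset.sum_nonneg fun i _ => hB i)]
        norm_num

theorem abs_integral_primitive_mul_le {x y : ℝ → ℝ} {a s b : ℝ} (has : a ≤ s) (hsb : s ≤ b)
    (hx : IntervalIntegrable x volume a b) (hy : IntervalIntegrable y volume a b) :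
    |∫ r in a..s, (∫ u in a..r, x u) * y r| ≤ (∫ r in a..b, |x r|) * ∫ r in a..b, |y r| := by
  have hP : 0 ≤ ∫ u in a..b, |x u| :=
    intervalIntegral.integral_nonneg (has.trans hsb) fun u _ => abs_nonneg _
  have hbound : ∀ r ∈ Ioc a s, ‖(∫ u in a..r, x u) * y r‖ ≤ (∫ u in a..b, |x u|) * |y r| := by
    intro r hr
    rw [Real.norm_eq_abs, abs_mul]
    gcongr
    calc |∫ u in a..r, x u| ≤ ∫ u in a..r, |x u| :=
          intervalIntegral.abs_integral_le_integral_abs hr.1.le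
      _ ≤ ∫ u in a..b, |x u| :=
          intervalIntegral.integral_mono_interval le_rfl hr.1.le (hr.2.trans hsb)
            (ae_of_all _ fun u => abs_nonneg _) hx.abs
  have hy' : IntervalIntegrable (fun r => |y r|) volume a s :=
    hy.abs.mono_set <| by
      rw [uIcc_of_le has, uIcc_of_le (has.trans hsb)]; exact Icc_subset_Icc_right hsb
  calc |∫ r in a..s, (∫ u in a..r, x u) * y r|
      ≤ ∫ r in a..s, (∫ u in a..b, |x u|) * |y r| :=
        intervalIntegral.norm_integral_le_of_norm_le has (ae_of_all _ hbound) (hy'.const_mul _)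
    _ = (∫ u in a..b, |x u|) * ∫ r in a..s, |y r| := intervalIntegral.integral_const_mul _ _
    _ ≤ (∫ u in a..b, |x u|) * ∫ r in a..b, |y r| := by
        gcongr
        exact intervalIntegral.integral_mono_interval le_rfl has hsb
          (ae_of_all _ fun u => abs_nonneg _) hy.abs

section Cells

variable {n k : ℕ}

theorem mem_Ico_div_iff (hn : 0 < n) {c s : ℝ} :
    s ∈ Ico (c / n) ((c + 1) / n) ↔ (n : ℝ) * s ∈ Ico c (c + 1) := by
  have hn' : (0 : ℝ) < n := by exact_mod_cast hn
  simp only [mem_Ico, div_le_iff₀ hn', lt_div_iff₀ hn', mul_comm]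

theorem natFloor_mul_eq_of_mem_Ico (hn : 0 < n) {s : ℝ}
    (hs : s ∈ Ico ((k : ℝ) / n) ((k + 1) / n)) : ⌊(n : ℝ) * s⌋₊ = k :=
  (Nat.floor_eq_iff ((Nat.cast_nonneg k).trans ((mem_Ico_div_iff hn).1 hs).1)).2
    ((mem_Ico_div_iff hn).1 hs)

theorem nfl_eq_of_mem_Ico (hn : 0 < n) {s : ℝ} (hs : s ∈ Ico ((k : ℝ) / n) ((k + 1) / n)) :
    nfl n s = k / n := by
  have hfloor : ⌊(n : ℝ) * s⌋ = k :=
    Int.floor_eq_iff.2 (by exact_mod_cast (mem_Ico_div_iff hn).1 hs)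
  rw [nfl, hfloor, Int.cast_natCast]

theorem mem_Ico_natFloor_mul (hn : 0 < n) {s : ℝ} (hs : 0 ≤ s) :
    s ∈ Ico ((⌊(n : ℝ) * s⌋₊ : ℝ) / n) ((⌊(n : ℝ) * s⌋₊ + 1) / n) :=
  (mem_Ico_div_iff hn).2 ⟨Nat.floor_le (by positivity), Nat.lt_floor_add_one _⟩

theorem div_le_add_one_div : (k : ℝ) / n ≤ (k + 1) / n := by
  gcongr; linarith

theorem intervalIntegral_div_nonneg {g : ℝ → ℝ} (hg : ∀ r, 0 ≤ g r) :
    0 ≤ ∫ r in (k : ℝ) / n..(k + 1) / n, g r :=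
  intervalIntegral.integral_nonneg div_le_add_one_div fun r _ => hg r

theorem Icc_div_subset_Icc (hk : k < n) : Icc ((k : ℝ) / n) ((k + 1) / n) ⊆ Icc 0 1 := by
  refine Icc_subset_Icc (by positivity) (div_le_one_of_le₀ ?_ (Nat.cast_nonneg n))
  exact_mod_cast hk

theorem uIcc_div_subset_uIcc (hk : k < n) : uIcc ((k : ℝ) / n) ((k + 1) / n) ⊆ uIcc 0 1 := by
  rw [uIcc_of_le div_le_add_one_div, uIcc_of_le zero_le_one]
  exact Icc_div_subset_Icc hk

theorem intervalIntegrable_and_integral_eq_sum_of_eqOn_Ioo {f : ℝ → ℝ} {g : ℕ → ℝ → ℝ}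
    (hn : n ≠ 0) (hg : ∀ k < n, IntervalIntegrable (g k) volume ((k : ℝ) / n) ((k + 1) / n))
    (hfg : ∀ k < n, EqOn f (g k) (Ioo ((k : ℝ) / n) ((k + 1) / n))) :
    IntervalIntegrable f volume 0 1 ∧
      ∫ s in (0 : ℝ)..1, f s = ∑ k ∈ Finset.range n, ∫ s in (k : ℝ) / n..(k + 1) / n, g k s := by
  have hfg' : ∀ k < n, EqOn f (g k) (uIoo ((k : ℝ) / n) ((k + 1) / n)) := fun k hk => by
    rw [uIoo_of_le div_le_add_one_div]; exact hfg k hk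
  have hf : ∀ k < n, IntervalIntegrable f volume (((k : ℕ) : ℝ) / n) (((k + 1 : ℕ) : ℝ) / n) :=
    fun k hk => by push_cast; exact (hg k hk).congr_uIoo (hfg' k hk).symm
  have h0 : ((0 : ℕ) : ℝ) / n = 0 := by simp
  have h1 : ((n : ℕ) : ℝ) / n = 1 := div_self (by exact_mod_cast hn)
  refine ⟨h0 ▸ h1 ▸ IntervalIntegrable.trans_iterate hf, ?_⟩
  have hsum := intervalIntegral.sum_integral_adjacent_intervals hf
  rw [h0, h1] at hsum
  rw [← hsum]
  refine Finset.sum_congr rfl fun k hk => ?_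
  push_cast
  exact intervalIntegral.integral_congr_uIoo (μ := volume) (hfg' k (Finset.mem_range.1 hk))

theorem sum_intervalIntegral_div_eq {f : ℝ → ℝ} (hn : n ≠ 0)
    (hf : IntervalIntegrable f volume 0 1) :
    ∑ k ∈ Finset.range n, ∫ s in (k : ℝ) / n..(k + 1) / n, f s = ∫ s in (0 : ℝ)..1, f s :=
  (intervalIntegrable_and_integral_eq_sum_of_eqOn_Ioo hn
    (fun _ hk => hf.mono_set (uIcc_div_subset_uIcc hk)) fun _ _ => eqOn_refl _ _).2.symm

theorem intervalIntegral_abs_div_le {f : ℝ → ℝ} (hk : k < n)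
    (hf : MemLp f 3 (volume.restrict (Icc 0 1))) :
    ∫ s in (k : ℝ) / n..(k + 1) / n, |f s| ≤
      (1 / n : ℝ) ^ (2 / 3 : ℝ) * (∫ s in (k : ℝ) / n..(k + 1) / n, |f s| ^ 3) ^ (1 / 3 : ℝ) := by
  have h := intervalIntegral_abs_le_of_memLp_three div_le_add_one_div
    (hf.mono_measure (Measure.restrict_mono (Ioc_subset_Icc_self.trans (Icc_div_subset_Icc hk))
      le_rfl))
  rwa [← sub_div, add_sub_cancel_left] at h

theorem mul_mul_intervalIntegral_abs_div_le {x y z : ℝ → ℝ} (hk : k < n)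
    (hx : MemLp x 3 (volume.restrict (Icc 0 1))) (hy : MemLp y 3 (volume.restrict (Icc 0 1)))
    (hz : MemLp z 3 (volume.restrict (Icc 0 1))) :
    (∫ r in (k : ℝ) / n..(k + 1) / n, |x r|) * (∫ r in (k : ℝ) / n..(k + 1) / n, |y r|) *
        (∫ r in (k : ℝ) / n..(k + 1) / n, |z r|) ≤
      (1 / n : ℝ) ^ 2 * ((∫ r in (k : ℝ) / n..(k + 1) / n, |x r| ^ 3) ^ (1 / 3 : ℝ) *
        (∫ r in (k : ℝ) / n..(k + 1) / n, |y r| ^ 3) ^ (1 / 3 : ℝ) *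
        (∫ r in (k : ℝ) / n..(k + 1) / n, |z r| ^ 3) ^ (1 / 3 : ℝ)) := by
  have h0 : ∀ f : ℝ → ℝ, 0 ≤ ∫ r in (k : ℝ) / n..(k + 1) / n, |f r| := fun f =>
    intervalIntegral_div_nonneg fun r => abs_nonneg _
  have hxk := intervalIntegral_abs_div_le hk hx
  have hyk := intervalIntegral_abs_div_le hk hy
  have hc : ((1 / n : ℝ) ^ (2 / 3 : ℝ)) ^ 3 = (1 / n : ℝ) ^ 2 := by
    rw [← Real.rpow_mul_natCast (by positivity)]; norm_num
  refine (mul_le_mul (mul_le_mul hxk hyk (h0 y) ((h0 x).trans hxk))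
    (intervalIntegral_abs_div_le hk hz) (h0 z) (mul_nonneg ((h0 x).trans hxk) ((h0 y).trans hyk))
    ).trans_eq ?_
  rw [← hc]
  ring

end Cells

theorem abs_integral_increment_mul_le {x y X : ℝ → ℝ} (hX : ∀ t, X t = ∫ s in (0 : ℝ)..t, x s)
    (hx : IntervalIntegrable x volume 0 1) (hy : IntervalIntegrable y volume 0 1) {n k : ℕ}
    (hk : k < n) {s : ℝ} (hs : s ∈ Ico ((k : ℝ) / n) ((k + 1) / n)) :
    |∫ r in nfl n s..s, (X r - X (nfl n r)) * y r| ≤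
      (∫ r in (k : ℝ) / n..(k + 1) / n, |x r|) * ∫ r in (k : ℝ) / n..(k + 1) / n, |y r| := by
  have hn : 0 < n := by omega
  have hx0 : ∀ r ∈ Icc ((k : ℝ) / n) s, IntervalIntegrable x volume 0 r := fun r hr =>
    hx.mono_set <| uIcc_subset_uIcc left_mem_uIcc <| by
      rw [uIcc_of_le zero_le_one]
      exact Icc_div_subset_Icc hk ⟨hr.1, hr.2.trans hs.2.le⟩
  have hincrement : EqOn (fun r => (X r - X (nfl n r)) * y r)
      (fun r => (∫ u in (k : ℝ) / n..r, x u) * y r) (uIcc ((k : ℝ) / n) s) := by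
    intro r hr
    rw [uIcc_of_le hs.1] at hr
    dsimp only
    rw [nfl_eq_of_mem_Ico hn ⟨hr.1, hr.2.trans_lt hs.2⟩, hX, hX,
      intervalIntegral.integral_interval_sub_left (hx0 r hr) (hx0 _ ⟨le_rfl, hs.1⟩)]
  rw [nfl_eq_of_mem_Ico hn hs, intervalIntegral.integral_congr hincrement]
  exact abs_integral_primitive_mul_le hs.1 hs.2.le (hx.mono_set (uIcc_div_subset_uIcc hk))
    (hy.mono_set (uIcc_div_subset_uIcc hk))

theorem abs_integral_le_sum_cells {x y z X : ℝ → ℝ} (hX : ∀ t, X t = ∫ s in (0 : ℝ)..t, x s)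
    (hx : IntervalIntegrable x volume 0 1) (hy : IntervalIntegrable y volume 0 1)
    (hz : IntervalIntegrable z volume 0 1) {n : ℕ} (hn : n ≠ 0) {t : ℝ}
    (ht : t ∈ Icc (0 : ℝ) 1) :
    |∫ s in (0 : ℝ)..t, (∫ r in nfl n s..s, (X r - X (nfl n r)) * y r) * z s| ≤
      ∑ k ∈ Finset.range n, (∫ r in (k : ℝ) / n..(k + 1) / n, |x r|) *
        (∫ r in (k : ℝ) / n..(k + 1) / n, |y r|) * ∫ r in (k : ℝ) / n..(k + 1) / n, |z r| := by
  set P : ℕ → ℝ := fun k => ∫ r in (k : ℝ) / n..(k + 1) / n, |x r|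
  set Q : ℕ → ℝ := fun k => ∫ r in (k : ℝ) / n..(k + 1) / n, |y r|
  have hPQ : ∀ k, 0 ≤ P k * Q k := fun k =>
    mul_nonneg (intervalIntegral_div_nonneg fun _ => abs_nonneg _)
      (intervalIntegral_div_nonneg fun _ => abs_nonneg _)
  set G : ℝ → ℝ := fun s => P ⌊(n : ℝ) * s⌋₊ * Q ⌊(n : ℝ) * s⌋₊ * |z s|
  obtain ⟨hG, hGsum⟩ := intervalIntegrable_and_integral_eq_sum_of_eqOn_Ioo (f := G)
    (g := fun k s => P k * Q k * |z s|) hn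
    (fun k hk => (hz.abs.mono_set (uIcc_div_subset_uIcc hk)).const_mul _)
    (fun k _ s hs => by
      simp only [G, natFloor_mul_eq_of_mem_Ico (by omega) (Ioo_subset_Ico_self hs)])
  have hbound : ∀ s ∈ Ico (0 : ℝ) 1,
      |(∫ r in nfl n s..s, (X r - X (nfl n r)) * y r) * z s| ≤ G s := by
    intro s hs
    have hk : ⌊(n : ℝ) * s⌋₊ < n := by
      rw [Nat.floor_lt (mul_nonneg (Nat.cast_nonneg n) hs.1)]
      exact mul_lt_of_lt_one_right (by positivity) hs.2
    rw [abs_mul]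
    exact mul_le_mul_of_nonneg_right
      (abs_integral_increment_mul_le hX hx hy hk (mem_Ico_natFloor_mul (by omega) hs.1))
      (abs_nonneg _)
  calc _ ≤ ∫ s in (0 : ℝ)..t, G s := by
        rw [← Real.norm_eq_abs]
        refine intervalIntegral.norm_integral_le_of_norm_le ht.1 ?_
          (hG.mono_set (uIcc_subset_uIcc left_mem_uIcc ?_))
        · filter_upwards [Measure.ae_ne volume 1] with s hs1 hs
          exact hbound s ⟨hs.1.le, lt_of_le_of_ne (hs.2.trans ht.2) hs1⟩
        · rwa [uIcc_of_le zero_le_one]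
    _ ≤ ∫ s in (0 : ℝ)..1, G s :=
        intervalIntegral.integral_mono_interval le_rfl ht.1 ht.2
          (ae_of_all _ fun s => mul_nonneg (hPQ _) (abs_nonneg _)) hG
    _ = _ := by
        rw [hGsum]
        exact Finset.sum_congr rfl fun k _ => intervalIntegral.integral_const_mul _ _

theorem sq_mul_sum_cells_le {x y z : ℝ → ℝ} {n : ℕ} (hn : n ≠ 0)
    (hx : MemLp x 3 (volume.restrict (Icc 0 1))) (hy : MemLp y 3 (volume.restrict (Icc 0 1)))
    (hz : MemLp z 3 (volume.restrict (Icc 0 1))) :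
    (n : ℝ) ^ 2 * ∑ k ∈ Finset.range n, (∫ r in (k : ℝ) / n..(k + 1) / n, |x r|) *
        (∫ r in (k : ℝ) / n..(k + 1) / n, |y r|) * ∫ r in (k : ℝ) / n..(k + 1) / n, |z r| ≤
      (∫ s in (0 : ℝ)..1, |x s| ^ 3) ^ ((1 : ℝ) / 3) *
        (∫ s in (0 : ℝ)..1, |y s| ^ 3) ^ ((1 : ℝ) / 3) *
        (∫ s in (0 : ℝ)..1, |z s| ^ 3) ^ ((1 : ℝ) / 3) := by
  have hsum : ∀ f : ℝ → ℝ, MemLp f 3 (volume.restrict (Icc 0 1)) →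
      ∑ k ∈ Finset.range n, ∫ r in (k : ℝ) / n..(k + 1) / n, |f r| ^ 3 =
        ∫ s in (0 : ℝ)..1, |f s| ^ 3 := fun f hf =>
    sum_intervalIntegral_div_eq hn <|
      (intervalIntegrable_iff_integrableOn_Icc_of_le zero_le_one).2
        ((memLp_natCast_iff_integrable_abs_pow (p := 3) (by norm_num) hf.1).1 hf)
  calc _ ≤ (n : ℝ) ^ 2 * ∑ k ∈ Finset.range n, (1 / n : ℝ) ^ 2 *
        ((∫ r in (k : ℝ) / n..(k + 1) / n, |x r| ^ 3) ^ (1 / 3 : ℝ) *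
          (∫ r in (k : ℝ) / n..(k + 1) / n, |y r| ^ 3) ^ (1 / 3 : ℝ) *
          (∫ r in (k : ℝ) / n..(k + 1) / n, |z r| ^ 3) ^ (1 / 3 : ℝ)) :=
        mul_le_mul_of_nonneg_left (Finset.sum_le_sum fun k hk =>
          mul_mul_intervalIntegral_abs_div_le (Finset.mem_range.1 hk) hx hy hz) (by positivity)
    _ = ∑ k ∈ Finset.range n,
        (∫ r in (k : ℝ) / n..(k + 1) / n, |x r| ^ 3) ^ (1 / 3 : ℝ) *
          (∫ r in (k : ℝ) / n..(k + 1) / n, |y r| ^ 3) ^ (1 / 3 : ℝ) *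
          (∫ r in (k : ℝ) / n..(k + 1) / n, |z r| ^ 3) ^ (1 / 3 : ℝ) := by
        rw [← Finset.mul_sum, ← mul_assoc, ← mul_pow, mul_one_div_cancel (by exact_mod_cast hn),
          one_pow, one_mul]
    _ ≤ _ := by
        rw [← hsum x hx, ← hsum y hy, ← hsum z hz]
        exact sum_rpow_mul_rpow_mul_rpow_le _
          (fun _ => intervalIntegral_div_nonneg fun r => by positivity)
          (fun _ => intervalIntegral_div_nonneg fun r => by positivity)
          (fun _ => intervalIntegral_div_nonneg fun r => by positivity)

/-- For `x, y, z ∈ L³([0,1])`, `X_t = ∫₀ᵗ x_s ds`, with `X_r^{(n)} = X_r − X_{n(r)}`,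
one has for every `n ≥ 1` and `t ∈ [0,1]`:
`n² |∫₀ᵗ (∫_{n(s)}^{s} X_r^{(n)} y_r dr) z_s ds| ≤ ‖x‖₃ ‖y‖₃ ‖z‖₃`. -/
theorem stmt_3 (x y z : ℝ → ℝ) (hx : Measurable x) (hy : Measurable y) (hz : Measurable z)
    (hx3 : IntegrableOn (fun s => |x s| ^ 3) (Set.Icc (0 : ℝ) 1))
    (hy3 : IntegrableOn (fun s => |y s| ^ 3) (Set.Icc (0 : ℝ) 1))
    (hz3 : IntegrableOn (fun s => |z s| ^ 3) (Set.Icc (0 : ℝ) 1))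
    (X : ℝ → ℝ) (hX : ∀ t, X t = ∫ s in (0 : ℝ)..t, x s)
    (n : ℕ) (hn : 1 ≤ n) (t : ℝ) (ht : t ∈ Set.Icc (0 : ℝ) 1) :
    (n : ℝ) ^ 2 * |∫ s in (0 : ℝ)..t, (∫ r in (nfl n s)..s, (X r - X (nfl n r)) * y r) * z s|
      ≤ (∫ s in (0 : ℝ)..1, |x s| ^ 3) ^ ((1 : ℝ) / 3)
        * (∫ s in (0 : ℝ)..1, |y s| ^ 3) ^ ((1 : ℝ) / 3)
        * (∫ s in (0 : ℝ)..1, |z s| ^ 3) ^ ((1 : ℝ) / 3) := by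
  have hn0 : n ≠ 0 := by omega
  have hL : ∀ f : ℝ → ℝ, Measurable f → IntegrableOn (fun s => |f s| ^ 3) (Icc (0 : ℝ) 1) →
      MemLp f 3 (volume.restrict (Icc 0 1)) := fun f hf hf3 =>
    (memLp_natCast_iff_integrable_abs_pow (p := 3) (by norm_num) hf.aestronglyMeasurable).2 hf3
  have hI : ∀ f : ℝ → ℝ, MemLp f 3 (volume.restrict (Icc 0 1)) →
      IntervalIntegrable f volume 0 1 := fun f hf =>
    (intervalIntegrable_iff_integrableOn_Icc_of_le zero_le_one).2 (hf.integrable (by norm_num))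
  have hxL := hL x hx hx3
  have hyL := hL y hy hy3
  have hzL := hL z hz hz3
  calc _ ≤ (n : ℝ) ^ 2 * ∑ k ∈ Finset.range n, (∫ r in (k : ℝ) / n..(k + 1) / n, |x r|) *
        (∫ r in (k : ℝ) / n..(k + 1) / n, |y r|) * ∫ r in (k : ℝ) / n..(k + 1) / n, |z r| := by
        gcongr
        exact abs_integral_le_sum_cells hX (hI x hxL) (hI y hyL) (hI z hzL) hn0 ht
    _ ≤ _ := sq_mul_sum_cells_le hn0 hxL hyL hzL
end

section
/- Let C be a continuous nondecreasing adapted ℝ^{d×d}-nonnegative-matrix-valued process such that C_t − C_s is a nonnegative definite matrix for t ≥ s. Then for all n, t, and all i,j: (N_t^n(C^{ij}))² ≤ N_t^n(C^{ii}) · N_t^n(C^{jj}), where N_t^n(F) = ∫₀ᵗ (F_s − F_{n(s)})² dF_s for a function F of finite variation. -/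
/-!
Every Riemann–Stieltjes sum of `N_t^n(C^{ij})` is a sum of terms
`(C^{ij}_u - C^{ij}_p)² (C^{ij}_v - C^{ij}_u)` with `p ≤ u ≤ v`. Since increments of `C` are
positive semidefinite, the Cauchy–Schwarz inequality for their entries bounds the square of
each such term by the product of the corresponding `ii` and `jj` terms, which are nonnegative.
The Cauchy–Schwarz inequality for finite sums then gives the claimed inequality for the
Riemann–Stieltjes sums, and it passes to the limit.
-/

open MeasureTheory Filter Finset

/-- `I` is the Riemann–Stieltjes integral `∫_a^b f dY`, defined as the limit of
left-endpoint Riemann–Stieltjes sums over uniform partitions. -/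
def IsRSIntegral (f Y : ℝ → ℝ) (a b I : ℝ) : Prop :=
  Tendsto (fun m : ℕ => ∑ i ∈ Finset.range m,
      f (a + (b - a) * i / m) * (Y (a + (b - a) * (i + 1) / m) - Y (a + (b - a) * i / m)))
    atTop (nhds I)

theorem nfl_le_self (n : ℕ) {s : ℝ} (hs : 0 ≤ s) : nfl n s ≤ s :=
  div_le_of_le_mul₀ n.cast_nonneg hs <| by simpa [mul_comm] using Int.floor_le ((n : ℝ) * s)

theorem Matrix.PosSemidef.apply_sq_le_mul_apply_diag {ι : Type*} [Fintype ι] [DecidableEq ι]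
    {M : Matrix ι ι ℝ} (hM : M.PosSemidef) (i j : ι) : M i j ^ 2 ≤ M i i * M j j := by
  have hsymm : M j i = M i j := by
    simpa using congrFun (congrFun hM.isHermitian i) j
  have hquad : ∀ x : ℝ, 0 ≤ M j j * (x * x) + 2 * M i j * x + M i i := by
    intro x
    have := hM.dotProduct_mulVec_nonneg (Pi.single i 1 + x • Pi.single j 1)
    simp only [star_trivial, Matrix.mulVec_add, Matrix.mulVec_single, MulOpposite.op_one,
      one_smul, Matrix.mulVec_smul, dotProduct_add, add_dotProduct, single_dotProduct,
      Matrix.col_apply, one_mul, smul_dotProduct, hsymm, smul_eq_mul, dotProduct_smul] at this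
    linarith
  have := discrim_le_zero hquad
  rw [discrim] at this
  linarith

section IncrementCauchySchwarz

variable {f g h : ℝ → ℝ}

theorem sq_term_le_mul_term (hg : Monotone g) (hh : Monotone h)
    (hfgh : ∀ a b, a ≤ b → (f b - f a) ^ 2 ≤ (g b - g a) * (h b - h a))
    {p u v : ℝ} (hpu : p ≤ u) (huv : u ≤ v) :
    ((f u - f p) ^ 2 * (f v - f u)) ^ 2 ≤
      ((g u - g p) ^ 2 * (g v - g u)) * ((h u - h p) ^ 2 * (h v - h u)) := by
  have hg₁ : 0 ≤ g u - g p := sub_nonneg.2 (hg hpu)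
  have hh₁ : 0 ≤ h u - h p := sub_nonneg.2 (hh hpu)
  have hg₂ : 0 ≤ g v - g u := sub_nonneg.2 (hg huv)
  have hh₂ : 0 ≤ h v - h u := sub_nonneg.2 (hh huv)
  calc ((f u - f p) ^ 2 * (f v - f u)) ^ 2
      = ((f u - f p) ^ 2) ^ 2 * (f v - f u) ^ 2 := by ring
    _ ≤ ((g u - g p) * (h u - h p)) ^ 2 * ((g v - g u) * (h v - h u)) := by
      gcongr
      · exact hfgh p u hpu
      · exact hfgh u v huv
    _ = ((g u - g p) ^ 2 * (g v - g u)) * ((h u - h p) ^ 2 * (h v - h u)) := by ring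

theorem IsRSIntegral.sq_le_mul (hg : Monotone g) (hh : Monotone h)
    (hfgh : ∀ a b, a ≤ b → (f b - f a) ^ 2 ≤ (g b - g a) * (h b - h a))
    {π : ℝ → ℝ} (hπ : ∀ s, 0 ≤ s → π s ≤ s) {t I J K : ℝ} (ht : 0 ≤ t)
    (hI : IsRSIntegral (fun s => (f s - f (π s)) ^ 2) f 0 t I)
    (hJ : IsRSIntegral (fun s => (g s - g (π s)) ^ 2) g 0 t J)
    (hK : IsRSIntegral (fun s => (h s - h (π s)) ^ 2) h 0 t K) :
    I ^ 2 ≤ J * K := by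
  refine le_of_tendsto_of_tendsto' (hI.pow 2) (hJ.mul hK) fun m => ?_
  refine sum_sq_le_sum_mul_sum_of_sq_le_mul _ (fun k _ => ?_) (fun k _ => ?_) fun k _ => ?_
  all_goals
    have hu : (0 : ℝ) ≤ 0 + (t - 0) * k / m := by positivity
    have huv : 0 + (t - 0) * k / m ≤ 0 + (t - 0) * (k + 1) / m := by gcongr; linarith
  · exact mul_nonneg (sq_nonneg _) (sub_nonneg.2 (hg huv))
  · exact mul_nonneg (sq_nonneg _) (sub_nonneg.2 (hh huv))
  · exact sq_term_le_mul_term hg hh hfgh (hπ _ hu) huv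

end IncrementCauchySchwarz

theorem stmt_19_general {d : ℕ} (C : ℝ → Matrix (Fin d) (Fin d) ℝ)
    (hpsd : ∀ s t : ℝ, s ≤ t → (C t - C s).PosSemidef)
    (n : ℕ) (t : ℝ) (ht : t ∈ Set.Icc (0 : ℝ) 1) (i j : Fin d)
    (Nij Nii Njj : ℝ)
    (hNij : IsRSIntegral (fun s => (C s i j - C (nfl n s) i j) ^ 2) (fun s => C s i j) 0 t Nij)
    (hNii : IsRSIntegral (fun s => (C s i i - C (nfl n s) i i) ^ 2) (fun s => C s i i) 0 t Nii)
    (hNjj : IsRSIntegral (fun s => (C s j j - C (nfl n s) j j) ^ 2) (fun s => C s j j) 0 t Njj) :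
    Nij ^ 2 ≤ Nii * Njj := by
  have hdiag_mono : ∀ k, Monotone fun s => C s k k := fun k a b hab =>
    sub_nonneg.1 (hpsd a b hab).diag_nonneg
  refine hNij.sq_le_mul (hdiag_mono i) (hdiag_mono j) (fun a b hab => ?_)
    (fun s hs => nfl_le_self n hs) ht.1 hNii hNjj
  simpa using (hpsd a b hab).apply_sq_le_mul_apply_diag i j

/-- Let `C` be a continuous matrix-valued function such that `C_t − C_s` is positive
semidefinite for `t ≥ s`. Then for all `n ≥ 1`, `t ∈ [0,1]` and all `i, j`:
`(N_t^n(C^{ij}))² ≤ N_t^n(C^{ii}) · N_t^n(C^{jj})`, where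
`N_t^n(F) = ∫₀ᵗ (F_s − F_{n(s)})² dF_s` (a Riemann–Stieltjes integral). -/
theorem stmt_19 {d : ℕ} (C : ℝ → Matrix (Fin d) (Fin d) ℝ)
    (hcont : ∀ i j, Continuous fun t => C t i j)
    (hpsd : ∀ s t : ℝ, s ≤ t → (C t - C s).PosSemidef)
    (n : ℕ) (hn : 1 ≤ n) (t : ℝ) (ht : t ∈ Set.Icc (0 : ℝ) 1) (i j : Fin d)
    (Nij Nii Njj : ℝ)
    (hNij : IsRSIntegral (fun s => (C s i j - C (nfl n s) i j) ^ 2) (fun s => C s i j) 0 t Nij)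
    (hNii : IsRSIntegral (fun s => (C s i i - C (nfl n s) i i) ^ 2) (fun s => C s i i) 0 t Nii)
    (hNjj : IsRSIntegral (fun s => (C s j j - C (nfl n s) j j) ^ 2) (fun s => C s j j) 0 t Njj) :
    Nij ^ 2 ≤ Nii * Njj :=
  stmt_19_general C hpsd n t ht i j Nij Nii Njj hNij hNii hNjj
end
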